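/- Let G be the transitive closure of a DAG on N vertices and Dᵢ the out-degree of vertex i in G. Any permutation π sorting vertices in non-increasing order of D is a reverse topological order of G: for every edge (i, j) ∈ G, vertex i appears before vertex j in π. -/
import Mathlib


/-- Sorting vertices in non-increasing order of out-degree in the transitive
closure of a DAG yields an order in which, for every closure edge (i, j),
vertex i appears before vertex j. -/
theorem depth_sort_is_reverse_topological
    {V : Type*} [Fintype V] (r : V → V → Prop)
    (hacyclic : ∀ v, ¬ Relation.TransGen r v v)
    (D : V → ℕ)
    (hD : ∀ i, D i = Nat.card {j : V | j ≠ i ∧ Relation.TransGen r i j})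
    (π : Fin (Fintype.card V) ≃ V)
    (hsorted : ∀ k l : Fin (Fintype.card V), k ≤ l → D (π l) ≤ D (π k)) :
    ∀ i j, Relation.TransGen r i j → π.symm i < π.symm j := by
  intro i j hij
  have hji : ¬ Relation.TransGen r j i := fun h => hacyclic i (hij.trans h)
  have hne : j ≠ i := fun h => hacyclic i (h ▸ hij)
  -- D j < D i
  have hsub : {k : V | k ≠ j ∧ Relation.TransGen r j k} ⊂
      {k : V | k ≠ i ∧ Relation.TransGen r i k} := by
    constructor
    · rintro k ⟨hkj, hjk⟩
      refine ⟨fun h => hji (h ▸ hjk), hij.trans hjk⟩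
    · intro h
      have : j ∈ {k : V | k ≠ i ∧ Relation.TransGen r i k} := ⟨hne, hij⟩
      exact (h this).1 rfl
  have hlt : D j < D i := by
    rw [hD, hD, Nat.card_coe_set_eq, Nat.card_coe_set_eq]
    exact Set.ncard_lt_ncard hsub (Set.toFinite _)
  by_contra hle
  push_neg at hle
  exact absurd (hsorted _ _ hle) (by simpa using hlt)
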